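/- Let R = [c₁,d₁] × [c₂,d₂] ⊂ ℝ² be a closed rectangle with c₁ < d₁ and c₂ < d₂, and let Ω̃ ⊆ R be a measurable subset contained in the interior of R. Let a : ℝ² → ℝ be continuously differentiable on a neighborhood of R, and let u, v : ℝ² → ℝ be twice continuously differentiable on a neighborhood of R. Assume: (i) ∇·(a∇u)(x,y) = 0 for all (x,y) ∈ R; (ii) ∇·(a∇v)(x,y) = (1_{Ω̃}·g)(x,y) for all (x,y) ∈ R, where g : ℝ² → ℝ is continuous on Ω̃; and (iii) v(x,y) = 0 for all (x,y) ∈ ∂R (the four edges of the rectangle). Then ∫_{Ω̃} g·u d(x,y) = ∫_{c₂}^{d₂} (u·a·∂ₓv)(d₁,y) dy − ∫_{c₂}^{d₂} (u·a·∂ₓv)(c₁,y) dy + ∫_{c₁}^{d₁} (u·a·∂_yv)(x,d₂) dx − ∫_{c₁}^{d₁} (u·a·∂_yv)(x,c₂) dx. In other words, the L² pairing of g with the confined solution u|_{Ω̃} of the Dirichlet problem equals the pairing of the boundary data u|_{∂R} with the conormal flux a·∂v/∂n of the adjoint (sourced, zero-boundary) problem (this is the classical-solution form of the paper's Theorem 3.3,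 ⟨g, S̃f⟩_{Ω̃} = ⟨S̃*g, f⟩_{∂Ω}). -/

import Mathlib

/-! The field `u a∇v - v a∇u` has divergence `u ∇⋅(a∇v) - v ∇⋅(a∇u)` (Green's second identity),
which on the rectangle equals `1_{Ω̃} g u`. The divergence theorem on the rectangle turns
`∫_{Ω̃} g u` into the outward flux of this field, and `v = 0` on `∂R` leaves only the terms
`u a ∂v/∂n`. -/

open MeasureTheory

/-- Partial derivative in the first coordinate of a function on `ℝ × ℝ`. -/
noncomputable def pderivX (f : ℝ × ℝ → ℝ) (p : ℝ × ℝ) : ℝ :=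
  deriv (fun t => f (t, p.2)) p.1

/-- Partial derivative in the second coordinate of a function on `ℝ × ℝ`. -/
noncomputable def pderivY (f : ℝ × ℝ → ℝ) (p : ℝ × ℝ) : ℝ :=
  deriv (fun t => f (p.1, t)) p.2

/-- The weighted divergence-form operator `∇ ⋅ (a ∇ f) = ∂ₓ(a ∂ₓ f) + ∂_y(a ∂_y f)`. -/
noncomputable def wdiv (a f : ℝ × ℝ → ℝ) (p : ℝ × ℝ) : ℝ :=
  pderivX (fun q => a q * pderivX f q) p + pderivY (fun q => a q * pderivY f q) p

open Set

section PartialDerivatives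

variable {f g : ℝ × ℝ → ℝ} {p : ℝ × ℝ}

lemma hasDerivAt_sliceX (hf : DifferentiableAt ℝ f p) :
    HasDerivAt (fun t => f (t, p.2)) (fderiv ℝ f p (1, 0)) p.1 :=
  hf.hasFDerivAt.comp_hasDerivAt p.1 ((hasDerivAt_id p.1).prodMk (hasDerivAt_const p.1 p.2))

lemma hasDerivAt_sliceY (hf : DifferentiableAt ℝ f p) :
    HasDerivAt (fun t => f (p.1, t)) (fderiv ℝ f p (0, 1)) p.2 :=
  hf.hasFDerivAt.comp_hasDerivAt p.2 ((hasDerivAt_const p.2 p.1).prodMk (hasDerivAt_id p.2))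

lemma pderivX_eq_fderiv (hf : DifferentiableAt ℝ f p) : pderivX f p = fderiv ℝ f p (1, 0) :=
  (hasDerivAt_sliceX hf).deriv

lemma pderivY_eq_fderiv (hf : DifferentiableAt ℝ f p) : pderivY f p = fderiv ℝ f p (0, 1) :=
  (hasDerivAt_sliceY hf).deriv

lemma pderivX_mul (hf : DifferentiableAt ℝ f p) (hg : DifferentiableAt ℝ g p) :
    pderivX (fun q => f q * g q) p = pderivX f p * g p + f p * pderivX g p :=
  deriv_mul (hasDerivAt_sliceX hf).differentiableAt (hasDerivAt_sliceX hg).differentiableAt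

lemma pderivY_mul (hf : DifferentiableAt ℝ f p) (hg : DifferentiableAt ℝ g p) :
    pderivY (fun q => f q * g q) p = pderivY f p * g p + f p * pderivY g p :=
  deriv_mul (hasDerivAt_sliceY hf).differentiableAt (hasDerivAt_sliceY hg).differentiableAt

lemma pderivX_sub (hf : DifferentiableAt ℝ f p) (hg : DifferentiableAt ℝ g p) :
    pderivX (fun q => f q - g q) p = pderivX f p - pderivX g p :=
  deriv_sub (hasDerivAt_sliceX hf).differentiableAt (hasDerivAt_sliceX hg).differentiableAt

lemma pderivY_sub (hf : DifferentiableAt ℝ f p) (hg : DifferentiableAt ℝ g p) :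
    pderivY (fun q => f q - g q) p = pderivY f p - pderivY g p :=
  deriv_sub (hasDerivAt_sliceY hf).differentiableAt (hasDerivAt_sliceY hg).differentiableAt

variable {s : Set (ℝ × ℝ)} {m n : WithTop ℕ∞}

lemma ContDiffOn.pderivX (hf : ContDiffOn ℝ n f s) (hs : IsOpen s) (hmn : m + 1 ≤ n) :
    ContDiffOn ℝ m (pderivX f) s := by
  refine ((hf.fderiv_of_isOpen hs hmn).clm_apply (contDiffOn_const (c := ((1 : ℝ), (0 : ℝ))))).congr
    fun q hq => ?_
  exact pderivX_eq_fderiv ((hf.contDiffAt (hs.mem_nhds hq)).differentiableAt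
    (by rintro rfl; simp at hmn))

lemma ContDiffOn.pderivY (hf : ContDiffOn ℝ n f s) (hs : IsOpen s) (hmn : m + 1 ≤ n) :
    ContDiffOn ℝ m (pderivY f) s := by
  refine ((hf.fderiv_of_isOpen hs hmn).clm_apply (contDiffOn_const (c := ((0 : ℝ), (1 : ℝ))))).congr
    fun q hq => ?_
  exact pderivY_eq_fderiv ((hf.contDiffAt (hs.mem_nhds hq)).differentiableAt
    (by rintro rfl; simp at hmn))

end PartialDerivatives

theorem integral_pderivX_add_pderivY_eq_of_contDiffOn {F G : ℝ × ℝ → ℝ} {s : Set (ℝ × ℝ)}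
    (hs : IsOpen s) (hF : ContDiffOn ℝ 1 F s) (hG : ContDiffOn ℝ 1 G s)
    {a b : ℝ × ℝ} (hab : a ≤ b) (hsub : Icc a b ⊆ s) :
    ∫ q in Icc a b, pderivX F q + pderivY G q
      = (∫ x in a.1..b.1, G (x, b.2)) - (∫ x in a.1..b.1, G (x, a.2))
        + (∫ y in a.2..b.2, F (b.1, y)) - ∫ y in a.2..b.2, F (a.1, y) := by
  have hdiff : ∀ {H : ℝ × ℝ → ℝ}, ContDiffOn ℝ 1 H s → ∀ q ∈ s, DifferentiableAt ℝ H q :=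
    fun hH q hq => (hH.contDiffAt (hs.mem_nhds hq)).differentiableAt_one
  have hfderiv : EqOn (fun q => pderivX F q + pderivY G q)
      (fun q => fderiv ℝ F q (1, 0) + fderiv ℝ G q (0, 1)) (Icc a b) := fun q hq => by
    dsimp only
    rw [pderivX_eq_fderiv (hdiff hF q (hsub hq)), pderivY_eq_fderiv (hdiff hG q (hsub hq))]
  have hint : IntegrableOn (fun q => pderivX F q + pderivY G q) (Icc a b) :=
    (((hF.pderivX (m := 0) hs (by norm_num)).continuousOn.add
      (hG.pderivY (m := 0) hs (by norm_num)).continuousOn).mono hsub).integrableOn_compact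
      isCompact_Icc
  have hinterior : Ioo a.1 b.1 ×ˢ Ioo a.2 b.2 ⊆ s :=
    fun q hq => hsub ⟨⟨hq.1.1.le, hq.2.1.le⟩, ⟨hq.1.2.le, hq.2.2.le⟩⟩
  rw [setIntegral_congr_fun measurableSet_Icc hfderiv]
  exact integral_divergence_prod_Icc_of_hasFDerivAt_off_countable_of_le F G (fderiv ℝ F)
    (fderiv ℝ G) a b hab ∅ countable_empty (hF.continuousOn.mono hsub) (hG.continuousOn.mono hsub)
    (fun q hq => (hdiff hF q (hinterior hq.1)).hasFDerivAt)
    (fun q hq => (hdiff hG q (hinterior hq.1)).hasFDerivAt)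
    (hint.congr_fun hfderiv measurableSet_Icc)

section GreenFlux

variable (a u v : ℝ × ℝ → ℝ)

noncomputable def greenFluxX : ℝ × ℝ → ℝ :=
  fun q => u q * (a q * pderivX v q) - v q * (a q * pderivX u q)

noncomputable def greenFluxY : ℝ × ℝ → ℝ :=
  fun q => u q * (a q * pderivY v q) - v q * (a q * pderivY u q)

variable {a u v} {s : Set (ℝ × ℝ)}

lemma ContDiffOn.greenFluxX (hs : IsOpen s) (ha : ContDiffOn ℝ 1 a s)
    (hu : ContDiffOn ℝ 2 u s) (hv : ContDiffOn ℝ 2 v s) : ContDiffOn ℝ 1 (greenFluxX a u v) s :=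
  ((hu.of_le (by norm_num)).mul (ha.mul (hv.pderivX hs le_rfl))).sub
    ((hv.of_le (by norm_num)).mul (ha.mul (hu.pderivX hs le_rfl)))

lemma ContDiffOn.greenFluxY (hs : IsOpen s) (ha : ContDiffOn ℝ 1 a s)
    (hu : ContDiffOn ℝ 2 u s) (hv : ContDiffOn ℝ 2 v s) : ContDiffOn ℝ 1 (greenFluxY a u v) s :=
  ((hu.of_le (by norm_num)).mul (ha.mul (hv.pderivY hs le_rfl))).sub
    ((hv.of_le (by norm_num)).mul (ha.mul (hu.pderivY hs le_rfl)))

lemma greenFluxX_of_eq_zero {q : ℝ × ℝ} (hq : v q = 0) :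
    greenFluxX a u v q = u q * a q * pderivX v q := by
  simp only [greenFluxX, hq, zero_mul, sub_zero, mul_assoc]

lemma greenFluxY_of_eq_zero {q : ℝ × ℝ} (hq : v q = 0) :
    greenFluxY a u v q = u q * a q * pderivY v q := by
  simp only [greenFluxY, hq, zero_mul, sub_zero, mul_assoc]

lemma pderivX_greenFluxX_add_pderivY_greenFluxY (hs : IsOpen s) (ha : ContDiffOn ℝ 1 a s)
    (hu : ContDiffOn ℝ 2 u s) (hv : ContDiffOn ℝ 2 v s) {p : ℝ × ℝ} (hp : p ∈ s) :
    pderivX (greenFluxX a u v) p + pderivY (greenFluxY a u v) p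
      = u p * wdiv a v p - v p * wdiv a u p := by
  have hdiff : ∀ {H : ℝ × ℝ → ℝ}, ContDiffOn ℝ 1 H s → DifferentiableAt ℝ H p :=
    fun hH => (hH.contDiffAt (hs.mem_nhds hp)).differentiableAt_one
  have du := hdiff (hu.of_le (by norm_num))
  have dv := hdiff (hv.of_le (by norm_num))
  have dvX := hdiff (ha.mul (hv.pderivX hs le_rfl))
  have duX := hdiff (ha.mul (hu.pderivX hs le_rfl))
  have dvY := hdiff (ha.mul (hv.pderivY hs le_rfl))
  have duY := hdiff (ha.mul (hu.pderivY hs le_rfl))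
  unfold greenFluxX greenFluxY
  rw [pderivX_sub (du.fun_mul dvX) (dv.fun_mul duX),
    pderivY_sub (du.fun_mul dvY) (dv.fun_mul duY), pderivX_mul du dvX, pderivX_mul dv duX,
    pderivY_mul du dvY, pderivY_mul dv duY, wdiv, wdiv]
  ring

end GreenFlux

theorem adjoint_map_pairing_identity_general
    (c₁ d₁ c₂ d₂ : ℝ) (hc₁ : c₁ < d₁) (hc₂ : c₂ < d₂)
    (Ω' : Set (ℝ × ℝ)) (hΩ'meas : MeasurableSet Ω')
    (hΩ'sub : Ω' ⊆ interior (Set.Icc c₁ d₁ ×ˢ Set.Icc c₂ d₂))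
    (g a u v : ℝ × ℝ → ℝ) (s : Set (ℝ × ℝ)) (hs : IsOpen s)
    (hRs : Set.Icc c₁ d₁ ×ˢ Set.Icc c₂ d₂ ⊆ s)
    (ha : ContDiffOn ℝ 1 a s) (hu : ContDiffOn ℝ 2 u s) (hv : ContDiffOn ℝ 2 v s)
    (huharm : ∀ p ∈ Set.Icc c₁ d₁ ×ˢ Set.Icc c₂ d₂, wdiv a u p = 0)
    (hveq : ∀ p ∈ Set.Icc c₁ d₁ ×ˢ Set.Icc c₂ d₂, wdiv a v p = Set.indicator Ω' g p)
    (hvbdleft : ∀ y ∈ Set.Icc c₂ d₂, v (c₁, y) = 0)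
    (hvbdright : ∀ y ∈ Set.Icc c₂ d₂, v (d₁, y) = 0)
    (hvbdbot : ∀ x ∈ Set.Icc c₁ d₁, v (x, c₂) = 0)
    (hvbdtop : ∀ x ∈ Set.Icc c₁ d₁, v (x, d₂) = 0) :
    (∫ p in Ω', g p * u p)
      = (∫ y in c₂..d₂, u (d₁, y) * a (d₁, y) * pderivX v (d₁, y))
        - (∫ y in c₂..d₂, u (c₁, y) * a (c₁, y) * pderivX v (c₁, y))
        + (∫ x in c₁..d₁, u (x, d₂) * a (x, d₂) * pderivY v (x, d₂))
        - (∫ x in c₁..d₁, u (x, c₂) * a (x, c₂) * pderivY v (x, c₂)) := by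
  have hR : Icc c₁ d₁ ×ˢ Icc c₂ d₂ = Icc (c₁, c₂) (d₁, d₂) := (Icc_prod_eq (c₁, c₂) (d₁, d₂)).symm
  rw [hR] at hΩ'sub hRs huharm hveq
  have hbulk : EqOn (fun q => pderivX (greenFluxX a u v) q + pderivY (greenFluxY a u v) q)
      (Ω'.indicator fun q => g q * u q) (Icc (c₁, c₂) (d₁, d₂)) := fun q hq => by
    dsimp only
    rw [pderivX_greenFluxX_add_pderivY_greenFluxY hs ha hu hv (hRs hq), huharm q hq, hveq q hq,
      mul_zero, sub_zero, indicator_mul_left, mul_comm]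
  have hflux := integral_pderivX_add_pderivY_eq_of_contDiffOn hs (.greenFluxX hs ha hu hv)
    (.greenFluxY hs ha hu hv) (a := (c₁, c₂)) (b := (d₁, d₂)) ⟨hc₁.le, hc₂.le⟩ hRs
  rw [setIntegral_congr_fun measurableSet_Icc hbulk, setIntegral_indicator hΩ'meas,
    inter_eq_right.mpr (hΩ'sub.trans interior_subset)] at hflux
  have hI₁ := uIcc_of_le hc₁.le
  have hI₂ := uIcc_of_le hc₂.le
  rw [hflux,
    intervalIntegral.integral_congr fun x hx => greenFluxY_of_eq_zero (hvbdtop x (hI₁ ▸ hx)),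
    intervalIntegral.integral_congr fun x hx => greenFluxY_of_eq_zero (hvbdbot x (hI₁ ▸ hx)),
    intervalIntegral.integral_congr fun y hy => greenFluxX_of_eq_zero (hvbdright y (hI₂ ▸ hy)),
    intervalIntegral.integral_congr fun y hy => greenFluxX_of_eq_zero (hvbdleft y (hI₂ ▸ hy))]
  ring

/-- Classical-solution form of Theorem 3.3 of the paper
(`⟨g, S̃ f⟩_{Ω̃} = ⟨S̃* g, f⟩_{∂Ω}`): if `u` is `a`-harmonic on the rectangle `R`,
`v` solves the sourced problem `∇⋅(a∇v) = 1_{Ω̃} g` with zero Dirichlet boundary data,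
then the pairing of `g` with `u` on `Ω̃` equals the pairing of the boundary values of
`u` with the conormal flux `a ∂v/∂n` on `∂R`. -/
theorem adjoint_map_pairing_identity
    (c₁ d₁ c₂ d₂ : ℝ) (hc₁ : c₁ < d₁) (hc₂ : c₂ < d₂)
    (Ω' : Set (ℝ × ℝ)) (hΩ'meas : MeasurableSet Ω')
    (hΩ'sub : Ω' ⊆ interior (Set.Icc c₁ d₁ ×ˢ Set.Icc c₂ d₂))
    (g a u v : ℝ × ℝ → ℝ) (s : Set (ℝ × ℝ)) (hs : IsOpen s)
    (hRs : Set.Icc c₁ d₁ ×ˢ Set.Icc c₂ d₂ ⊆ s)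
    (ha : ContDiffOn ℝ 1 a s) (hu : ContDiffOn ℝ 2 u s) (hv : ContDiffOn ℝ 2 v s)
    (hg : ContinuousOn g Ω')
    (huharm : ∀ p ∈ Set.Icc c₁ d₁ ×ˢ Set.Icc c₂ d₂, wdiv a u p = 0)
    (hveq : ∀ p ∈ Set.Icc c₁ d₁ ×ˢ Set.Icc c₂ d₂, wdiv a v p = Set.indicator Ω' g p)
    (hvbdleft : ∀ y ∈ Set.Icc c₂ d₂, v (c₁, y) = 0)
    (hvbdright : ∀ y ∈ Set.Icc c₂ d₂, v (d₁, y) = 0)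
    (hvbdbot : ∀ x ∈ Set.Icc c₁ d₁, v (x, c₂) = 0)
    (hvbdtop : ∀ x ∈ Set.Icc c₁ d₁, v (x, d₂) = 0) :
    (∫ p in Ω', g p * u p)
      = (∫ y in c₂..d₂, u (d₁, y) * a (d₁, y) * pderivX v (d₁, y))
        - (∫ y in c₂..d₂, u (c₁, y) * a (c₁, y) * pderivX v (c₁, y))
        + (∫ x in c₁..d₁, u (x, d₂) * a (x, d₂) * pderivY v (x, d₂))
        - (∫ x in c₁..d₁, u (x, c₂) * a (x, c₂) * pderivY v (x, c₂)) :=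
  adjoint_map_pairing_identity_general c₁ d₁ c₂ d₂ hc₁ hc₂ Ω' hΩ'meas hΩ'sub g a u v s hs hRs ha hu
    hv huharm hveq hvbdleft hvbdright hvbdbot hvbdtop
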